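/- (SMSP is equivalent to sufficient impurity decrease.) A function f : {−1,1}^d → ℝ satisfies SMSP if and only if there exists λ > 0 such that f satisfies SID(λ), i.e., for every subcube C ⊆ {−1,1}^d with Var(f(X) | X ∈ C) > 0 one has max_{1≤k≤d} Corr²(f(X), X_k | X ∈ C) ≥ λ, where X is uniformly distributed on {−1,1}^d. -/

import Mathlib

open MeasureTheory ProbabilityTheory

namespace GreedyTrees

/-- The `±1` value of a Boolean coordinate. -/
def sgn (b : Bool) : ℝ := if b then 1 else -1

variable {d n : ℕ}

/-- The Fourier character (monomial) `χ_S` on the Boolean cube `{±1}^d`. -/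
def chi (S : Finset (Fin d)) (x : Fin d → Bool) : ℝ := ∏ j ∈ S, sgn (x j)

/-- Expectation with respect to the uniform distribution on `{±1}^d`. -/
noncomputable def cubeMean (f : (Fin d → Bool) → ℝ) : ℝ := (∑ x : Fin d → Bool, f x) / 2 ^ d

/-- The `L²` risk `R(g, f) = E_{X ∼ ν} (g X - f X)²` for `ν` uniform on `{±1}^d`. -/
noncomputable def cubeRisk (g f : (Fin d → Bool) → ℝ) : ℝ := cubeMean fun x => (g x - f x) ^ 2

/-- Variance with respect to the uniform distribution on `{±1}^d`. -/
noncomputable def cubeVar (f : (Fin d → Bool) → ℝ) : ℝ := cubeMean fun x => (f x - cubeMean f) ^ 2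

/-- Supremum norm of a function on the cube. -/
noncomputable def supAbs (f : (Fin d → Bool) → ℝ) : ℝ := ⨆ x, |f x|

/-- Fourier coefficient `α_S` of `f`. -/
noncomputable def fourierCoeff (f : (Fin d → Bool) → ℝ) (S : Finset (Fin d)) : ℝ :=
  cubeMean fun x => f x * chi S x

open Classical in
/-- Fourier support `𝒮` of `f` : subsets with nonzero Fourier coefficient. -/
noncomputable def fourierSupport (f : (Fin d → Bool) → ℝ) : Finset (Finset (Fin d)) :=
  Finset.univ.filter fun S => fourierCoeff f S ≠ 0

/-- Union of a list of finsets. -/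
def listUnion (L : List (Finset (Fin d))) : Finset (Fin d) := L.foldr (· ∪ ·) ∅

/-- Staircase condition: each entry brings in at most one new coordinate. -/
def Staircase (L : List (Finset (Fin d))) : Prop :=
  ∀ (i : ℕ) (h : i < L.length), ((L.get ⟨i, h⟩) \ listUnion (L.take i)).card ≤ 1

/-- The merged-staircase property (MSP) of a collection of subsets. -/
def MSP (Sc : Finset (Finset (Fin d))) : Prop :=
  ∃ L : List (Finset (Fin d)), L.toFinset = Sc ∧ L.Nodup ∧ Staircase L

/-- `S` is connected to `∅` in the Fourier graph of the collection `Sc`. -/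
def ReachesEmpty (Sc : Finset (Finset (Fin d))) (S : Finset (Fin d)) : Prop :=
  ∃ L : List (Finset (Fin d)), (∀ T ∈ L, T ∈ Sc) ∧ S ∈ L ∧ Staircase L

open Classical in
/-- `𝒮_MSP` : the part of the collection connected to `∅` in the Fourier graph. -/
noncomputable def mspPart (Sc : Finset (Finset (Fin d))) : Finset (Finset (Fin d)) :=
  Sc.filter fun S => ReachesEmpty Sc S

/-- `T` is a traversal of a collection: it meets every member in ≥ 2 coordinates. -/
def IsTraversal (Sc : Finset (Finset (Fin d))) (T : Finset (Fin d)) : Prop :=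
  ∀ S ∈ Sc, 2 ≤ (T ∩ S).card

/-- The MSP residual `r_MSP = Σ_{S ∈ 𝒮 \ 𝒮_MSP} α_S χ_S` of `f`. -/
noncomputable def mspResidual (f : (Fin d → Bool) → ℝ) : (Fin d → Bool) → ℝ :=
  fun x => ∑ S ∈ fourierSupport f \ mspPart (fourierSupport f), fourierCoeff f S * chi S x

/-- Total Fourier weight `w(𝒜) = Σ_{S ∈ 𝒜} α_S²` of a collection of vertices. -/
noncomputable def wt (f : (Fin d → Bool) → ℝ) (A : Finset (Finset (Fin d))) : ℝ :=
  ∑ S ∈ A, fourierCoeff f S ^ 2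

/-- The subcube (cell) `{x : x_j = z_j for j ∈ J}` as a finset of points. -/
def subcube (J : Finset (Fin d)) (z : Fin d → Bool) : Finset (Fin d → Bool) :=
  Finset.univ.filter fun x => ∀ j ∈ J, x j = z j

/-- Conditional mean of `f` on a subcube. -/
noncomputable def subcubeMean (f : (Fin d → Bool) → ℝ) (J : Finset (Fin d))
    (z : Fin d → Bool) : ℝ :=
  (∑ x ∈ subcube J z, f x) / (subcube J z).card

/-- Conditional covariance of `f` and `g` on a subcube. -/
noncomputable def subcubeCov (f g : (Fin d → Bool) → ℝ) (J : Finset (Fin d))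
    (z : Fin d → Bool) : ℝ :=
  (∑ x ∈ subcube J z, (f x - subcubeMean f J z) * (g x - subcubeMean g J z)) /
    (subcube J z).card

/-- Conditional variance of `f` on a subcube. -/
noncomputable def subcubeVar (f : (Fin d → Bool) → ℝ) (J : Finset (Fin d))
    (z : Fin d → Bool) : ℝ :=
  subcubeCov f f J z

/-- The restriction of `f` to the subcube `(J, z)` viewed as a function of the
free coordinates. -/
def restrictCube (f : (Fin d → Bool) → ℝ) (J : Finset (Fin d)) (z : Fin d → Bool) :
    (Fin d → Bool) → ℝ :=
  fun x => f fun j => if j ∈ J then z j else x j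

/-- `f` (as a function) satisfies the merged-staircase property. -/
def MSPfun (f : (Fin d → Bool) → ℝ) : Prop := MSP (fourierSupport f)

/-- `f` satisfies the stable merged-staircase property: every restriction to a
subcube satisfies MSP. -/
def SMSPfun (f : (Fin d → Bool) → ℝ) : Prop :=
  ∀ (J : Finset (Fin d)) (z : Fin d → Bool), MSPfun (restrictCube f J z)

/-- `f ∈ SMSP(λ)` : for every subcube on which `f` is nonconstant,
`max_{k ∉ J(C)} Cov²(f(X), X_k | X ∈ C) · 2^{-|J(C) ∩ S*|} ≥ λ`. -/
def SMSPlam (f : (Fin d → Bool) → ℝ) (Sstar : Finset (Fin d)) (lam : ℝ) : Prop :=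
  ∀ (J : Finset (Fin d)) (z : Fin d → Bool),
    (∃ x ∈ subcube J z, ∃ y ∈ subcube J z, f x ≠ f y) →
    ∃ k ∉ J, lam ≤ (subcubeCov f (fun y => sgn (y k)) J z) ^ 2 *
      ((2 : ℝ) ^ (J ∩ Sstar).card)⁻¹

/-- Sub-Gaussian random variable with parameter `σ` (via the MGF bound). -/
def IsSubGaussian {Ω : Type*} [MeasurableSpace Ω] (μ : Measure Ω) (Z : Ω → ℝ)
    (σ : ℝ) : Prop :=
  ∀ t : ℝ, ∫ ω, Real.exp (t * Z ω) ∂μ ≤ Real.exp (σ ^ 2 * t ^ 2 / 2)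

/-- Indices of the samples lying in the cell determined by the values of `x`
on the coordinates in `J`. -/
def cellIdx (X : Fin n → Fin d → Bool) (x : Fin d → Bool) (J : Finset (Fin d)) :
    Finset (Fin n) :=
  Finset.univ.filter fun i => ∀ j ∈ J, X i j = x j

/-- Value of a split criterion `F` at coordinate `k` in a cell: it depends on
the data only through the marginal data `{(X_{ik}, Y_i) : i in the cell}`. -/
def critVal (F : Multiset (Bool × ℝ) → ℝ) (X : Fin n → Fin d → Bool) (Y : Fin n → ℝ)
    (x : Fin d → Bool) (J : Finset (Fin d)) (k : Fin d) : ℝ :=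
  F ((cellIdx X x J).val.map fun i => (X i k, Y i))

/-- Abstract model of a regression tree fitted by a greedy tree algorithm:
for every dataset and query point it records the coordinates split on along the
root-to-leaf path of the query point.  Each split coordinate maximizes a fixed
sign-flip invariant criterion `F` of the marginal data in the current cell,
every split cell contains at least one sample, and the path depends on the
query point only through the coordinates split along it (tree structure). -/
structure GreedyTreeModel (n d : ℕ) where
  F : Multiset (Bool × ℝ) → ℝ
  flip_invariant : ∀ m : Multiset (Bool × ℝ), F (m.map fun p => (!p.1, p.2)) = F m
  splits : (Fin n → Fin d → Bool) → (Fin n → ℝ) → (Fin d → Bool) → List (Fin d)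
  nodup : ∀ X Y x, (splits X Y x).Nodup
  greedy : ∀ X Y x (t : ℕ) (ht : t < (splits X Y x).length) (k : Fin d),
      k ∉ ((splits X Y x).take t).toFinset →
      critVal F X Y x ((splits X Y x).take t).toFinset k ≤
        critVal F X Y x ((splits X Y x).take t).toFinset ((splits X Y x).get ⟨t, ht⟩)
  nonempty_internal : ∀ X Y x (t : ℕ), t < (splits X Y x).length →
      (cellIdx X x ((splits X Y x).take t).toFinset).Nonempty
  consistent : ∀ X Y x x', (∀ j ∈ splits X Y x, x j = x' j) → splits X Y x' = splits X Y x

/-- The set `J(x; D_n, Θ)` of coordinates split along the query path of `x`. -/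
def GreedyTreeModel.queryCoords (M : GreedyTreeModel n d) (X : Fin n → Fin d → Bool)
    (Y : Fin n → ℝ) (x : Fin d → Bool) : Finset (Fin d) :=
  (M.splits X Y x).toFinset

/-- Prediction of the fitted tree: the mean response in the leaf containing `x`. -/
noncomputable def GreedyTreeModel.pred (M : GreedyTreeModel n d)
    (X : Fin n → Fin d → Bool) (Y : Fin n → ℝ) (x : Fin d → Bool) : ℝ :=
  (∑ i ∈ cellIdx X x (M.queryCoords X Y x), Y i) /
    (cellIdx X x (M.queryCoords X Y x)).card

/-- Mean of a multiset of reals. -/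
noncomputable def msetMean (m : Multiset ℝ) : ℝ := m.sum / (m.card : ℝ)

/-- Empirical variance (impurity) of a multiset of reals. -/
noncomputable def msetVar (m : Multiset ℝ) : ℝ :=
  ((m.map fun y => (y - msetMean m) ^ 2).sum) / (m.card : ℝ)

/-- The CART impurity decrease, as a function of the marginal data
`{(X_{ik}, Y_i)}` of a coordinate in a cell. -/
noncomputable def impurityDecrease (m : Multiset (Bool × ℝ)) : ℝ :=
  msetVar (m.map Prod.snd) -
    (((m.filter fun p => p.1 = true).card : ℝ) / (m.card : ℝ)) *
      msetVar ((m.filter fun p => p.1 = true).map Prod.snd) -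
    (((m.filter fun p => p.1 = false).card : ℝ) / (m.card : ℝ)) *
      msetVar ((m.filter fun p => p.1 = false).map Prod.snd)

/-- A CART model: a greedy tree model whose criterion is the impurity decrease,
grown with the minimum impurity decrease stopping rule with threshold `γ`. -/
structure CARTModel (n d : ℕ) (γ : ℝ) extends GreedyTreeModel n d where
  F_eq : F = impurityDecrease
  continue_split : ∀ X Y x (t : ℕ) (ht : t < (splits X Y x).length),
      γ ≤ (((cellIdx X x ((splits X Y x).take t).toFinset).card : ℝ) / (n : ℝ)) *
        critVal impurityDecrease X Y x ((splits X Y x).take t).toFinset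
          ((splits X Y x).get ⟨t, ht⟩)
  stop_leaf : ∀ X Y x (k : Fin d), k ∉ (splits X Y x).toFinset →
      (((cellIdx X x (splits X Y x).toFinset).card : ℝ) / (n : ℝ)) *
        critVal impurityDecrease X Y x (splits X Y x).toFinset k < γ

/-- Number of samples in the subcube `(J, z)`. -/
def cellN (X : Fin n → Fin d → Bool) (J : Finset (Fin d)) (z : Fin d → Bool) : ℕ :=
  (cellIdx X z J).card

/-- Mean response over the samples in the subcube `(J, z)`. -/
noncomputable def cellYbar (X : Fin n → Fin d → Bool) (Y : Fin n → ℝ)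
    (J : Finset (Fin d)) (z : Fin d → Bool) : ℝ :=
  (∑ i ∈ cellIdx X z J, Y i) / (cellN X J z : ℝ)

/-- Empirical square-root impurity decrease
`Δ̂^{1/2}(k; C, D) = √(p_k(C)(1 - p_k(C))) (Ȳ_{T_{k,1}C} - Ȳ_{T_{k,-1}C})`. -/
noncomputable def empSqrtID (X : Fin n → Fin d → Bool) (Y : Fin n → ℝ)
    (J : Finset (Fin d)) (z : Fin d → Bool) (k : Fin d) : ℝ :=
  Real.sqrt (((cellN X (insert k J) (Function.update z k true) : ℝ) / (cellN X J z : ℝ)) *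
      (1 - (cellN X (insert k J) (Function.update z k true) : ℝ) / (cellN X J z : ℝ))) *
    (cellYbar X Y (insert k J) (Function.update z k true) -
      cellYbar X Y (insert k J) (Function.update z k false))

/-- Population square-root impurity decrease
`Δ^{1/2}(k; C) = (E[Y | X ∈ T_{k,1}C] - E[Y | X ∈ T_{k,-1}C]) / 2`
(for zero-mean noise, conditional means of `Y` equal conditional means of `f*`). -/
noncomputable def popSqrtID (f : (Fin d → Bool) → ℝ) (J : Finset (Fin d))
    (z : Fin d → Bool) (k : Fin d) : ℝ :=
  (subcubeMean f (insert k J) (Function.update z k true) -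
    subcubeMean f (insert k J) (Function.update z k false)) / 2

/-- Binary decision tree with axis-aligned splits and real leaf labels. -/
inductive TreeFun (d : ℕ) : Type
  | leaf : ℝ → TreeFun d
  | node : Fin d → TreeFun d → TreeFun d → TreeFun d

/-- Evaluation of a tree as a piecewise constant function on the cube. -/
def TreeFun.eval : TreeFun d → (Fin d → Bool) → ℝ
  | .leaf c, _ => c
  | .node k l r, x => if x k then TreeFun.eval r x else TreeFun.eval l x

/-- Depth of a tree. -/
def TreeFun.depth : TreeFun d → ℕ
  | .leaf _ => 0
  | .node _ l r => max (TreeFun.depth l) (TreeFun.depth r) + 1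

/-- All leaf labels bounded by `M` in absolute value. -/
def TreeFun.leafBound (M : ℝ) : TreeFun d → Prop
  | .leaf c => |c| ≤ M
  | .node _ l r => TreeFun.leafBound M l ∧ TreeFun.leafBound M r

/-- Empirical `L²` risk of a tree on a dataset. -/
noncomputable def empRisk (D : Fin n → (Fin d → Bool) × ℝ) (t : TreeFun d) : ℝ :=
  (∑ i, ((D i).2 - t.eval (D i).1) ^ 2) / n

/-- A greedy tree grown along the query path of a point with every cell being
split (no stopping rule): the path has full length `d`. -/
structure FullGreedyPath (n d : ℕ) where
  F : Multiset (Bool × ℝ) → ℝ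
  flip_invariant : ∀ m : Multiset (Bool × ℝ), F (m.map fun p => (!p.1, p.2)) = F m
  splits : (Fin n → Fin d → Bool) → (Fin n → ℝ) → (Fin d → Bool) → List (Fin d)
  nodup : ∀ X Y x, (splits X Y x).Nodup
  length_eq : ∀ X Y x, (splits X Y x).length = d
  greedy : ∀ X Y x (t : ℕ) (ht : t < (splits X Y x).length) (k : Fin d),
      k ∉ ((splits X Y x).take t).toFinset →
      critVal F X Y x ((splits X Y x).take t).toFinset k ≤
        critVal F X Y x ((splits X Y x).take t).toFinset ((splits X Y x).get ⟨t, ht⟩)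

/-!
On a cell `C` where `f` is nonconstant, the degree-one Fourier coefficient `α_{k}` of `f|_C` is
exactly `Cov(f(X), X_k | X ∈ C)`, and `Var(X_k | X ∈ C) = 1` for a free coordinate `k`. If `f|_C`
satisfies MSP, the first nonempty set of a staircase ordering of its Fourier support is a
singleton `{k}`, so `Corr²(f(X), X_k | X ∈ C) > 0`; as there are finitely many cells, these
correlations are bounded below by some `λ > 0`.

Conversely, if `f|_C` fails MSP, let `D` be the set of coordinates covered by the part of the
Fourier support reachable from `∅` by a staircase. Every other support set has at least two
coordinates outside `D` (otherwise it would be reachable too), so after further fixing the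
coordinates in `D` no degree-one coefficient survives, while for a suitable choice of the fixed
values an unreachable support set leaves a nonzero coefficient of degree `≥ 2`. On that subcube
`f` is nonconstant but uncorrelated with every coordinate, contradicting `SID(λ)`.
-/

open Finset
open scoped BigOperators

lemma sgn_mul_self (b : Bool) : sgn b * sgn b = 1 := by cases b <;> norm_num [sgn]

lemma cubeMean_eq_expect (g : (Fin d → Bool) → ℝ) : cubeMean g = 𝔼 x, g x := by
  rw [cubeMean, Fintype.expect_eq_sum_div_card]
  simp

lemma chi_eq_prod_univ (S : Finset (Fin d)) (x : Fin d → Bool) :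
    chi S x = ∏ j, if j ∈ S then sgn (x j) else 1 := by
  rw [chi, prod_ite_mem, univ_inter]

lemma chi_mul_chi (S T : Finset (Fin d)) (x : Fin d → Bool) :
    chi S x * chi T x = chi (symmDiff S T) x := by
  simp only [chi_eq_prod_univ, ← prod_mul_distrib, mem_symmDiff]
  refine prod_congr rfl fun j _ => ?_
  by_cases hS : j ∈ S <;> by_cases hT : j ∈ T <;> simp [hS, hT, sgn_mul_self]

lemma cubeMean_chi (S : Finset (Fin d)) : cubeMean (chi S) = if S = ∅ then 1 else 0 := by
  have hfactor : ∀ j, ∑ b : Bool, (if j ∈ S then sgn b else 1) = if j ∈ S then 0 else 2 := by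
    intro j; by_cases hj : j ∈ S <;> simp [hj, sgn]
  rw [cubeMean]
  simp only [chi_eq_prod_univ]
  rw [← Fintype.prod_sum (fun j b => if j ∈ S then sgn b else 1),
    prod_congr rfl fun j _ => hfactor j]
  split_ifs with hS
  · simp [hS]
  · obtain ⟨j, hj⟩ := nonempty_iff_ne_empty.mpr hS
    rw [prod_eq_zero (mem_univ j) (by simp [hj]), zero_div]

lemma cubeMean_chi_mul_chi (S T : Finset (Fin d)) :
    cubeMean (fun x => chi S x * chi T x) = if S = T then 1 else 0 := by
  simp only [chi_mul_chi]
  rw [show (fun x => chi (symmDiff S T) x) = chi (symmDiff S T) from rfl, cubeMean_chi]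
  exact if_congr (by rw [← bot_eq_empty, symmDiff_eq_bot]) rfl rfl

lemma sum_chi_mul_chi_eq_ite (x y : Fin d → Bool) :
    ∑ S : Finset (Fin d), chi S x * chi S y = if x = y then 2 ^ d else 0 := by
  have hchi : ∀ S : Finset (Fin d), chi S x * chi S y = ∏ j ∈ S, sgn (x j) * sgn (y j) := by
    intro S; rw [chi, chi, prod_mul_distrib]
  have hfactor : ∀ j, 1 + sgn (x j) * sgn (y j) = if x j = y j then 2 else 0 := by
    intro j; cases x j <;> cases y j <;> norm_num [sgn]
  simp only [hchi]
  rw [← powerset_univ, ← prod_one_add, prod_congr rfl fun j _ => hfactor j, prod_ite_zero,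
    prod_const, card_univ, Fintype.card_fin]
  by_cases hxy : x = y
  · simp [hxy]
  · have : ¬ ∀ j ∈ univ, x j = y j := fun h => hxy (funext fun j => h j (mem_univ j))
    rw [if_neg this, if_neg hxy]

theorem fourier_inversion (g : (Fin d → Bool) → ℝ) (x : Fin d → Bool) :
    ∑ S, fourierCoeff g S * chi S x = g x := by
  simp only [fourierCoeff, cubeMean, div_mul_eq_mul_div, ← sum_div, sum_mul, mul_assoc]
  rw [sum_comm]
  simp only [← mul_sum, sum_chi_mul_chi_eq_ite, mul_ite, mul_zero, sum_ite_eq', mem_univ, if_true]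
  field_simp

theorem cubeMean_mul_eq_sum_fourierCoeff (g h : (Fin d → Bool) → ℝ) :
    cubeMean (fun x => g x * h x) = ∑ S, fourierCoeff g S * fourierCoeff h S := by
  have hg : ∀ x, g x * h x = ∑ S, fourierCoeff g S * (chi S x * h x) := by
    intro x; rw [← fourier_inversion g x, sum_mul]; simp only [mul_assoc]
  simp only [hg, fourierCoeff, cubeMean_eq_expect, expect_sum_comm, ← mul_expect, mul_comm (h _)]

lemma fourierCoeff_empty (g : (Fin d → Bool) → ℝ) : fourierCoeff g ∅ = cubeMean g := by
  simp [fourierCoeff, chi]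

lemma fourierCoeff_sub_const (g : (Fin d → Bool) → ℝ) (c : ℝ) (S : Finset (Fin d)) :
    fourierCoeff (fun x => g x - c) S = fourierCoeff g S - c * if S = ∅ then 1 else 0 := by
  simp only [fourierCoeff, ← cubeMean_chi, cubeMean_eq_expect, sub_mul, expect_sub_distrib,
    mul_expect]

theorem cubeVar_eq_sum_sq (g : (Fin d → Bool) → ℝ) :
    cubeVar g = ∑ S with S ≠ ∅, fourierCoeff g S ^ 2 := by
  simp only [cubeVar, sq, cubeMean_mul_eq_sum_fourierCoeff, fourierCoeff_sub_const, sum_filter]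
  refine sum_congr rfl fun S _ => ?_
  by_cases hS : S = ∅ <;> simp [hS, fourierCoeff_empty]

theorem cubeVar_pos_iff (g : (Fin d → Bool) → ℝ) :
    0 < cubeVar g ↔ ∃ S ≠ ∅, fourierCoeff g S ≠ 0 := by
  rw [cubeVar_eq_sum_sq, sum_pos_iff_of_nonneg fun S _ => sq_nonneg _]
  simp [sq_pos_iff]

lemma restrictCube_apply (f : (Fin d → Bool) → ℝ) (J : Finset (Fin d)) (z x : Fin d → Bool) :
    restrictCube f J z x = f (J.piecewise z x) := rfl

lemma restrictCube_restrictCube (f : (Fin d → Bool) → ℝ) (J D : Finset (Fin d))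
    (z w : Fin d → Bool) :
    restrictCube (restrictCube f J z) D w = restrictCube f (J ∪ D) (J.piecewise z w) := by
  ext x
  simp only [restrictCube_apply]
  congr 1
  ext j
  by_cases hJ : j ∈ J <;> by_cases hD : j ∈ D <;> simp [hJ, hD]

lemma mem_subcube {J : Finset (Fin d)} {z x : Fin d → Bool} :
    x ∈ subcube J z ↔ ∀ j ∈ J, x j = z j := by
  simp [subcube]

lemma card_subcube (J : Finset (Fin d)) (z : Fin d → Bool) : #(subcube J z) = 2 ^ #Jᶜ := by
  have hpi : subcube J z = Fintype.piFinset fun j => if j ∈ J then {z j} else univ := by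
    ext x
    simp only [mem_subcube, Fintype.mem_piFinset]
    refine forall_congr' fun j => ?_
    by_cases hj : j ∈ J <;> simp [hj]
  rw [hpi, Fintype.card_piFinset, ← prod_const, ← univ_inter Jᶜ, ← prod_ite_mem]
  refine prod_congr rfl fun j _ => ?_
  by_cases hj : j ∈ J <;> simp [hj]

lemma sum_restrictCube (F : (Fin d → Bool) → ℝ) (J : Finset (Fin d)) (z : Fin d → Bool) :
    ∑ x, restrictCube F J z x = 2 ^ #J * ∑ y ∈ subcube J z, F y := by
  have hmaps : ∀ x ∈ (univ : Finset (Fin d → Bool)), J.piecewise z x ∈ subcube J z :=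
    fun x _ => mem_subcube.mpr fun j hj => J.piecewise_eq_of_mem z x hj
  have hfibre : ∀ y ∈ subcube J z, univ.filter (fun x => J.piecewise z x = y) = subcube Jᶜ y := by
    intro y hy
    ext x
    simp only [mem_filter, mem_univ, true_and, mem_subcube, mem_compl]
    refine ⟨fun h j hj => by rw [← h, J.piecewise_eq_of_notMem z x hj], fun h => ?_⟩
    ext j
    by_cases hj : j ∈ J
    · rw [J.piecewise_eq_of_mem z x hj, mem_subcube.mp hy j hj]
    · rw [J.piecewise_eq_of_notMem z x hj, h j hj]
  rw [← sum_fiberwise_of_maps_to hmaps, mul_sum]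
  refine sum_congr rfl fun y hy => ?_
  rw [sum_congr rfl fun x hx => by rw [restrictCube_apply, (mem_filter.mp hx).2], sum_const,
    hfibre y hy, card_subcube, compl_compl, nsmul_eq_mul]
  push_cast
  rfl

theorem subcubeMean_eq_cubeMean (F : (Fin d → Bool) → ℝ) (J : Finset (Fin d))
    (z : Fin d → Bool) : subcubeMean F J z = cubeMean (restrictCube F J z) := by
  have hcard : (2 : ℝ) ^ d = 2 ^ #J * 2 ^ #Jᶜ := by
    rw [← pow_add, add_comm, card_compl_add_card, Fintype.card_fin]
  rw [subcubeMean, cubeMean, sum_restrictCube, card_subcube, hcard]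
  push_cast
  rw [mul_div_mul_left _ _ (by positivity)]

theorem subcubeCov_eq_cubeMean (f g : (Fin d → Bool) → ℝ) (J : Finset (Fin d))
    (z : Fin d → Bool) :
    subcubeCov f g J z = cubeMean fun x =>
      (restrictCube f J z x - cubeMean (restrictCube f J z)) *
        (restrictCube g J z x - cubeMean (restrictCube g J z)) := by
  rw [subcubeCov, ← subcubeMean_eq_cubeMean, ← subcubeMean_eq_cubeMean]
  exact subcubeMean_eq_cubeMean
    (fun y => (f y - subcubeMean f J z) * (g y - subcubeMean g J z)) J z

theorem subcubeVar_eq_cubeVar (f : (Fin d → Bool) → ℝ) (J : Finset (Fin d))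
    (z : Fin d → Bool) : subcubeVar f J z = cubeVar (restrictCube f J z) := by
  simp only [subcubeVar, subcubeCov_eq_cubeMean, cubeVar, sq]

lemma chi_piecewise (S D : Finset (Fin d)) (w x : Fin d → Bool) :
    chi S (D.piecewise w x) = chi (S ∩ D) w * chi (S \ D) x := by
  rw [chi, chi, chi, ← prod_piecewise]
  refine prod_congr rfl fun j _ => ?_
  by_cases hj : j ∈ D <;> simp [hj]

theorem fourierCoeff_restrictCube (g : (Fin d → Bool) → ℝ) (D : Finset (Fin d))
    (w : Fin d → Bool) (T : Finset (Fin d)) :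
    fourierCoeff (restrictCube g D w) T =
      ∑ S with S \ D = T, fourierCoeff g S * chi (S ∩ D) w := by
  have hexpand : ∀ x, restrictCube g D w x * chi T x =
      ∑ S, fourierCoeff g S * chi (S ∩ D) w * (chi (S \ D) x * chi T x) := by
    intro x
    rw [restrictCube_apply, ← fourier_inversion g, sum_mul]
    simp only [chi_piecewise, mul_assoc]
  simp only [fourierCoeff, hexpand, cubeMean_eq_expect, expect_sum_comm, ← mul_expect]
  simp only [← cubeMean_eq_expect, cubeMean_chi_mul_chi, mul_ite, mul_one, mul_zero, sum_ite,
    sum_const_zero, add_zero]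

lemma fourierCoeff_restrictCube_singleton_of_mem (f : (Fin d → Bool) → ℝ)
    {J : Finset (Fin d)} {k : Fin d} (hk : k ∈ J) (z : Fin d → Bool) :
    fourierCoeff (restrictCube f J z) {k} = 0 := by
  rw [fourierCoeff_restrictCube]
  refine sum_eq_zero fun S hS => absurd hk ?_
  have hkS : k ∈ S \ J := (mem_filter.mp hS).2 ▸ mem_singleton_self k
  exact (mem_sdiff.mp hkS).2

lemma restrictCube_sgn_of_notMem {J : Finset (Fin d)} {k : Fin d} (hk : k ∉ J)
    (z : Fin d → Bool) : restrictCube (fun y => sgn (y k)) J z = chi {k} := by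
  ext x
  simp [restrictCube_apply, chi, hk]

theorem subcubeCov_sgn (f : (Fin d → Bool) → ℝ) (J : Finset (Fin d)) (z : Fin d → Bool)
    (k : Fin d) :
    subcubeCov f (fun y => sgn (y k)) J z = fourierCoeff (restrictCube f J z) {k} := by
  rw [subcubeCov_eq_cubeMean]
  by_cases hk : k ∈ J
  · have hconst : restrictCube (fun y => sgn (y k)) J z = fun _ => sgn (z k) := by
      ext x; simp [restrictCube_apply, hk]
    simp [hconst, cubeMean_eq_expect, fourierCoeff_restrictCube_singleton_of_mem f hk]
  · rw [restrictCube_sgn_of_notMem hk, cubeMean_chi, if_neg (singleton_ne_empty k)]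
    simp only [sub_zero]
    rw [← fourierCoeff, fourierCoeff_sub_const, if_neg (singleton_ne_empty k), mul_zero, sub_zero]

theorem subcubeVar_sgn {J : Finset (Fin d)} {k : Fin d} (hk : k ∉ J) (z : Fin d → Bool) :
    subcubeVar (fun y => sgn (y k)) J z = 1 := by
  rw [subcubeVar_eq_cubeVar, restrictCube_sgn_of_notMem hk, cubeVar, cubeMean_chi,
    if_neg (singleton_ne_empty k)]
  simp only [sub_zero, sq]
  rw [cubeMean_chi_mul_chi, if_pos rfl]

lemma listUnion_eq_sup (L : List (Finset (Fin d))) : listUnion L = L.toFinset.sup id := by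
  induction L with
  | nil => rfl
  | cons a L ih => simp [listUnion, ← ih]

lemma subset_listUnion_of_mem {L : List (Finset (Fin d))} {T : Finset (Fin d)} (hT : T ∈ L) :
    T ⊆ listUnion L := by
  rw [listUnion_eq_sup]
  exact le_sup (f := id) (List.mem_toFinset.mpr hT)

lemma listUnion_append (L₁ L₂ : List (Finset (Fin d))) :
    listUnion (L₁ ++ L₂) = listUnion L₁ ∪ listUnion L₂ := by
  simp only [listUnion_eq_sup, List.toFinset_append, sup_union]
  rfl

lemma staircase_append_singleton_iff {L : List (Finset (Fin d))} {S : Finset (Fin d)} :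
    Staircase (L ++ [S]) ↔ Staircase L ∧ #(S \ listUnion L) ≤ 1 := by
  have hbefore : ∀ i (hi : i < L.length), ((L ++ [S]).get ⟨i, by simp; omega⟩ = L.get ⟨i, hi⟩) ∧
      (L ++ [S]).take i = L.take i := fun i hi =>
    ⟨by simp [List.getElem_append_left hi], by simp [List.take_append, Nat.sub_eq_zero_of_le hi.le]⟩
  have hend : ((L ++ [S]).get ⟨L.length, by simp⟩ = S) ∧ (L ++ [S]).take L.length = L := by simp
  constructor
  · intro h
    refine ⟨fun i hi => ?_, ?_⟩
    · have hi' := h i (by simp; omega)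
      rwa [(hbefore i hi).1, (hbefore i hi).2] at hi'
    · have hlast := h L.length (by simp)
      rwa [hend.1, hend.2] at hlast
  · rintro ⟨hL, hS⟩ i hi
    rcases Nat.lt_or_ge i L.length with hlt | hge
    · rw [(hbefore i hlt).1, (hbefore i hlt).2]; exact hL i hlt
    · obtain rfl : i = L.length := by simp at hi; omega
      rw [hend.1, hend.2]; exact hS

lemma staircase_nil : Staircase ([] : List (Finset (Fin d))) := fun _ h => absurd h (by simp)

lemma Staircase.append {L₁ L₂ : List (Finset (Fin d))} (h₁ : Staircase L₁)
    (h₂ : Staircase L₂) : Staircase (L₁ ++ L₂) := by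
  induction L₂ using List.reverseRecOn with
  | nil => simpa using h₁
  | append_singleton L S ih =>
    rw [← List.append_assoc, staircase_append_singleton_iff] at *
    refine ⟨ih h₂.1, le_trans (card_le_card (sdiff_subset_sdiff subset_rfl ?_)) h₂.2⟩
    rw [listUnion_append]
    exact subset_union_right

lemma Staircase.exists_singleton_mem {L : List (Finset (Fin d))} (hL : Staircase L)
    {S : Finset (Fin d)} (hS : S ∈ L) (hne : S.Nonempty) : ∃ k, {k} ∈ L := by
  induction L using List.reverseRecOn generalizing S with
  | nil => simp at hS
  | append_singleton L T ih =>
    rw [staircase_append_singleton_iff] at hL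
    by_cases hprev : ∃ S' ∈ L, S'.Nonempty
    · obtain ⟨S', hS', hne'⟩ := hprev
      obtain ⟨k, hk⟩ := ih hL.1 hS' hne'
      exact ⟨k, List.mem_append_left _ hk⟩
    · simp only [not_exists, not_and, not_nonempty_iff_eq_empty] at hprev
      have hU : listUnion L = ∅ := by
        rw [listUnion_eq_sup]
        exact (Finset.sup_eq_bot_iff _ _).mpr fun S' hS' =>
          hprev S' (List.mem_toFinset.mp hS')
      obtain rfl : S = T := by
        rcases List.mem_append.mp hS with h | h
        · exact absurd (hprev S h) (nonempty_iff_ne_empty.mp hne)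
        · simpa using h
      rw [hU, sdiff_empty] at hL
      obtain ⟨k, rfl⟩ := card_eq_one.mp (le_antisymm hL.2 (card_pos.mpr hne))
      exact ⟨k, by simp⟩

lemma Staircase.exists_nodup {L : List (Finset (Fin d))} (hL : Staircase L) :
    ∃ L' : List (Finset (Fin d)), L'.toFinset = L.toFinset ∧ L'.Nodup ∧ Staircase L' := by
  induction L using List.reverseRecOn with
  | nil => exact ⟨[], rfl, List.nodup_nil, staircase_nil⟩
  | append_singleton L S ih =>
    rw [staircase_append_singleton_iff] at hL
    obtain ⟨L', hL'L, hnd, hst⟩ := ih hL.1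
    by_cases hS : S ∈ L
    · exact ⟨L', by simp [hL'L, hS], hnd, hst⟩
    · have hS' : S ∉ L' := by rw [← List.mem_toFinset, hL'L, List.mem_toFinset]; exact hS
      refine ⟨L' ++ [S], by simp [hL'L], ?_, ?_⟩
      · refine List.nodup_append.mpr ⟨hnd, List.nodup_singleton S, ?_⟩
        simpa using fun a ha (h : a = S) => hS' (h ▸ ha)
      · rw [staircase_append_singleton_iff, listUnion_eq_sup, hL'L, ← listUnion_eq_sup]
        exact ⟨hst, hL.2⟩

lemma reachesEmpty_of_card_sdiff_le_one {Sc : Finset (Finset (Fin d))}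
    {L : List (Finset (Fin d))} (hLSc : ∀ T ∈ L, T ∈ Sc) (hL : Staircase L)
    {S : Finset (Fin d)} (hS : S ∈ Sc) (hcard : #(S \ listUnion L) ≤ 1) :
    ReachesEmpty Sc S := by
  refine ⟨L ++ [S], fun T hT => ?_, by simp, staircase_append_singleton_iff.mpr ⟨hL, hcard⟩⟩
  rcases List.mem_append.mp hT with hT | hT
  · exact hLSc T hT
  · exact List.mem_singleton.mp hT ▸ hS

lemma exists_staircase_of_forall_reachesEmpty {Sc A : Finset (Finset (Fin d))}
    (hA : ∀ S ∈ A, ReachesEmpty Sc S) :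
    ∃ L : List (Finset (Fin d)), (∀ T ∈ L, T ∈ Sc) ∧ (∀ S ∈ A, S ∈ L) ∧ Staircase L := by
  classical
  induction A using Finset.induction_on with
  | empty => exact ⟨[], by simp, by simp, staircase_nil⟩
  | insert S A _ ih =>
    obtain ⟨M, hMSc, hSM, hM⟩ := hA S (mem_insert_self S A)
    obtain ⟨L, hLSc, hAL, hL⟩ := ih fun T hT => hA T (mem_insert_of_mem hT)
    refine ⟨M ++ L, fun T hT => ?_, fun T hT => ?_, hM.append hL⟩
    · rcases List.mem_append.mp hT with hT | hT
      exacts [hMSc T hT, hLSc T hT]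
    · rcases mem_insert.mp hT with rfl | hT
      exacts [List.mem_append_left _ hSM, List.mem_append_right _ (hAL T hT)]

theorem msp_of_forall_reachesEmpty {Sc : Finset (Finset (Fin d))}
    (h : ∀ S ∈ Sc, ReachesEmpty Sc S) : MSP Sc := by
  classical
  obtain ⟨L, hLSc, hScL, hL⟩ := exists_staircase_of_forall_reachesEmpty h
  obtain ⟨L', hL'L, hnd, hL'⟩ := hL.exists_nodup
  refine ⟨L', ?_, hnd, hL'⟩
  ext S
  rw [hL'L, List.mem_toFinset]
  exact ⟨hLSc S, hScL S⟩

lemma mem_fourierSupport {g : (Fin d → Bool) → ℝ} {S : Finset (Fin d)} :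
    S ∈ fourierSupport g ↔ fourierCoeff g S ≠ 0 := by
  simp [fourierSupport]

theorem MSPfun.exists_fourierCoeff_singleton_ne_zero {g : (Fin d → Bool) → ℝ} (hg : MSPfun g)
    (hvar : 0 < cubeVar g) : ∃ k, fourierCoeff g {k} ≠ 0 := by
  obtain ⟨S, hS, hcoeff⟩ := (cubeVar_pos_iff g).mp hvar
  obtain ⟨L, hLSc, -, hL⟩ := hg
  have hSL : S ∈ L := by rw [← List.mem_toFinset, hLSc]; exact mem_fourierSupport.mpr hcoeff
  obtain ⟨k, hk⟩ := hL.exists_singleton_mem hSL (nonempty_iff_ne_empty.mpr hS)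
  exact ⟨k, mem_fourierSupport.mp (hLSc ▸ List.mem_toFinset.mpr hk)⟩

theorem fourierCoeff_fourierCoeff_restrictCube (g : (Fin d → Bool) → ℝ)
    {D T U : Finset (Fin d)} (hT : Disjoint T D) (hU : U ⊆ D) :
    fourierCoeff (fun w => fourierCoeff (restrictCube g D w) T) U = fourierCoeff g (U ∪ T) := by
  simp only [fourierCoeff_restrictCube]
  rw [fourierCoeff, cubeMean_eq_expect]
  simp only [sum_mul, expect_sum_comm, mul_assoc, ← mul_expect, ← cubeMean_eq_expect,
    cubeMean_chi_mul_chi, mul_ite, mul_one, mul_zero]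
  rw [sum_eq_single_of_mem (U ∪ T)]
  · rw [if_pos (by rw [union_inter_distrib_right, inter_eq_left.mpr hU,
      disjoint_iff_inter_eq_empty.mp hT, union_empty])]
  · simp [mem_filter, union_sdiff_distrib, sdiff_eq_empty_iff_subset.mpr hU,
      hT.sdiff_eq_left]
  · intro S hS hne
    rw [if_neg]
    rintro rfl
    exact hne (by rw [← (mem_filter.mp hS).2, union_comm, sdiff_union_inter])

lemma exists_fourierCoeff_restrictCube_ne_zero (g : (Fin d → Bool) → ℝ) (D : Finset (Fin d))
    {S : Finset (Fin d)} (hS : fourierCoeff g S ≠ 0) :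
    ∃ w, fourierCoeff (restrictCube g D w) (S \ D) ≠ 0 := by
  by_contra! h
  have hcoeff := fourierCoeff_fourierCoeff_restrictCube g (sdiff_disjoint : Disjoint (S \ D) D)
    (inter_subset_right : S ∩ D ⊆ D)
  rw [union_comm, sdiff_union_inter] at hcoeff
  exact hS (by rw [← hcoeff]; simp only [h]; simp [fourierCoeff, cubeMean])

lemma fourierCoeff_restrictCube_singleton_eq_zero (g : (Fin d → Bool) → ℝ)
    {D : Finset (Fin d)} (w : Fin d → Bool) (k : Fin d)
    (h : ∀ S, fourierCoeff g S ≠ 0 → #(S \ D) ≠ 1) :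
    fourierCoeff (restrictCube g D w) {k} = 0 := by
  rw [fourierCoeff_restrictCube]
  refine sum_eq_zero fun S hS => ?_
  by_contra hne
  exact h S (left_ne_zero_of_mul hne) (by rw [(mem_filter.mp hS).2, card_singleton])

theorem exists_restrictCube_of_not_MSPfun {g : (Fin d → Bool) → ℝ} (hg : ¬ MSPfun g) :
    ∃ D w, 0 < cubeVar (restrictCube g D w) ∧
      ∀ k, fourierCoeff (restrictCube g D w) {k} = 0 := by
  classical
  set Sc := fourierSupport g
  obtain ⟨L, hLSc, hcover, hL⟩ :=
    exists_staircase_of_forall_reachesEmpty (A := mspPart Sc) fun S hS => (mem_filter.mp hS).2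
  have hsubset : ∀ S ∈ Sc, #(S \ listUnion L) ≤ 1 → S \ listUnion L = ∅ := fun S hS hcard =>
    sdiff_eq_empty_iff_subset.mpr <| subset_listUnion_of_mem <| hcover S <|
      mem_filter.mpr ⟨hS, reachesEmpty_of_card_sdiff_le_one hLSc hL hS hcard⟩
  obtain ⟨S₀, hS₀, hr₀⟩ : ∃ S ∈ Sc, ¬ ReachesEmpty Sc S := by
    by_contra! h
    exact hg (msp_of_forall_reachesEmpty h)
  obtain ⟨w, hw⟩ :=
    exists_fourierCoeff_restrictCube_ne_zero g (listUnion L) (mem_fourierSupport.mp hS₀)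
  refine ⟨listUnion L, w, (cubeVar_pos_iff _).mpr ⟨S₀ \ listUnion L, fun h => hr₀ ?_, hw⟩,
    fun k => fourierCoeff_restrictCube_singleton_eq_zero g w k fun S hS hone => ?_⟩
  · exact reachesEmpty_of_card_sdiff_le_one hLSc hL hS₀ (by simp [h])
  · simp [hsubset S (mem_fourierSupport.mpr hS) hone.le] at hone

/-- The squared correlation `Corr²(f(X), X_k | X ∈ C)` on the subcube `C = (J, z)`. -/
noncomputable def subcubeCorrSq (f : (Fin d → Bool) → ℝ) (J : Finset (Fin d)) (z : Fin d → Bool)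
    (k : Fin d) : ℝ :=
  (subcubeCov f (fun y => sgn (y k)) J z) ^ 2 /
    (subcubeVar f J z * subcubeVar (fun y => sgn (y k)) J z)

lemma subcubeCorrSq_pos {f : (Fin d → Bool) → ℝ} {J : Finset (Fin d)} {z : Fin d → Bool}
    {k : Fin d} (hvar : 0 < subcubeVar f J z)
    (hk : fourierCoeff (restrictCube f J z) {k} ≠ 0) : 0 < subcubeCorrSq f J z k := by
  have hkJ : k ∉ J := fun hkJ => hk (fourierCoeff_restrictCube_singleton_of_mem f hkJ z)
  rw [subcubeCorrSq, subcubeCov_sgn, subcubeVar_sgn hkJ, mul_one]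
  exact div_pos (sq_pos_iff.mpr hk) hvar

lemma exists_pos_forall_le_of_pos {ι : Type*} [Finite ι] (r : ι → ℝ) :
    ∃ lam > 0, ∀ i, 0 < r i → lam ≤ r i := by
  classical
  cases nonempty_fintype ι
  by_cases hne : (univ.filter fun i => 0 < r i).Nonempty
  · obtain ⟨i₀, hi₀, hmin⟩ := exists_min_image _ r hne
    exact ⟨r i₀, (mem_filter.mp hi₀).2, fun i hi => hmin i (mem_filter.mpr ⟨mem_univ i, hi⟩)⟩
  · exact ⟨1, one_pos, fun i hi => absurd ⟨i, mem_filter.mpr ⟨mem_univ i, hi⟩⟩ hne⟩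

/-- SMSP is equivalent to sufficient impurity decrease.
`f` satisfies SMSP iff there exists `λ > 0` such that for every subcube `C`
with `Var(f(X) | X ∈ C) > 0` one has
`max_{1 ≤ k ≤ d} Corr²(f(X), X_k | X ∈ C) ≥ λ`. -/
theorem smsp_iff_sufficient_impurity_decrease
    (d : ℕ) (f : (Fin d → Bool) → ℝ) :
    SMSPfun f ↔ ∃ lam : ℝ, 0 < lam ∧
      ∀ (J : Finset (Fin d)) (z : Fin d → Bool),
        0 < subcubeVar f J z →
        ∃ k : Fin d, lam ≤ (subcubeCov f (fun y => sgn (y k)) J z) ^ 2 /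
          (subcubeVar f J z * subcubeVar (fun y => sgn (y k)) J z) := by
  constructor
  · intro hsmsp
    obtain ⟨lam, hlam, hle⟩ := exists_pos_forall_le_of_pos
      fun p : (Finset (Fin d) × (Fin d → Bool)) × Fin d => subcubeCorrSq f p.1.1 p.1.2 p.2
    refine ⟨lam, hlam, fun J z hvar => ?_⟩
    obtain ⟨k, hk⟩ := (hsmsp J z).exists_fourierCoeff_singleton_ne_zero
      (by rwa [← subcubeVar_eq_cubeVar])
    exact ⟨k, hle ((J, z), k) (subcubeCorrSq_pos hvar hk)⟩
  · rintro ⟨lam, hlam, hsid⟩ J z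
    by_contra hmsp
    obtain ⟨D, w, hvar, hzero⟩ := exists_restrictCube_of_not_MSPfun hmsp
    rw [restrictCube_restrictCube, ← subcubeVar_eq_cubeVar] at hvar
    obtain ⟨k, hk⟩ := hsid _ _ hvar
    rw [subcubeCov_sgn, ← restrictCube_restrictCube, hzero, zero_pow two_ne_zero, zero_div] at hk
    exact hk.not_gt hlam

end GreedyTrees
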